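/- arXiv:2605.12701 — 2 statements merged into one kernel-verified Lean document; each statement's English description precedes it below -/
import Mathlib

section
/- Let f : ℝ^d → ℝ be continuously differentiable, let b, x, x̃ ∈ ℝ^d, let k be a coordinate index, let c ∈ ℝ and ε ≥ 0. Suppose |(∂f/∂x_k)(b + α(x − b)) − c| ≤ ε and |(∂f/∂x_k)(b + α(x̃ − b)) − c| ≤ ε for all α ∈ [0,1]. Then |IG_k(x; b) − IG_k(x̃; b) − (x_k − x̃_k) · c| ≤ ε · (|x_k − b_k| + |x̃_k − b_k|). -/
/-- Integrated gradients attribution of coordinate `j` at input `x` with baseline `b`: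
`IG_j(x; b) = (x_j − b_j) · ∫₀¹ (∂f/∂x_j)(b + α(x − b)) dα`. -/
noncomputable def IG {d : ℕ} (f : EuclideanSpace ℝ (Fin d) → ℝ) (j : Fin d)
    (x b : EuclideanSpace ℝ (Fin d)) : ℝ :=
  (x j - b j) * ∫ α in (0:ℝ)..1, fderiv ℝ f (b + α • (x - b)) (EuclideanSpace.single j 1)

/-! Both attributions are within `ε · |x_k − b_k|` of the linear prediction `(x_k − b_k) · c`,
because averaging a function that stays `ε`-close to `c` gives a value `ε`-close to `c`;
the claim is the triangle inequality for the difference of the two. -/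

open MeasureTheory

theorem norm_intervalIntegral_sub_smul_le {E : Type*} [NormedAddCommGroup E] [NormedSpace ℝ E]
    [CompleteSpace E] {g : ℝ → E} {a b ε : ℝ} {c : E} (hab : a ≤ b)
    (hg : IntervalIntegrable g volume a b)
    (h : ∀ t ∈ Set.Icc a b, ‖g t - c‖ ≤ ε) :
    ‖(∫ t in a..b, g t) - (b - a) • c‖ ≤ ε * (b - a) := by
  have hsub : (∫ t in a..b, g t) - (b - a) • c = ∫ t in a..b, (g t - c) := by
    rw [intervalIntegral.integral_sub hg intervalIntegrable_const,
      intervalIntegral.integral_const]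
  rw [hsub, ← abs_of_nonneg (sub_nonneg.2 hab)]
  refine intervalIntegral.norm_integral_le_of_norm_le_const fun t ht => h t ?_
  rw [Set.uIoc_of_le hab] at ht
  exact Set.Ioc_subset_Icc_self ht

theorem ContDiff.continuous_fderiv_apply_segment {E F : Type*} [NormedAddCommGroup E]
    [NormedSpace ℝ E] [NormedAddCommGroup F] [NormedSpace ℝ F] {f : E → F}
    (hf : ContDiff ℝ 1 f) (b x v : E) :
    Continuous fun α : ℝ => fderiv ℝ f (b + α • (x - b)) v :=
  ((hf.continuous_fderiv one_ne_zero).comp (by fun_prop)).clm_apply continuous_const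

theorem abs_IG_sub_mul_le {d : ℕ} {f : EuclideanSpace ℝ (Fin d) → ℝ} (hf : ContDiff ℝ 1 f)
    (b x : EuclideanSpace ℝ (Fin d)) (k : Fin d) {c ε : ℝ}
    (h : ∀ α ∈ Set.Icc (0:ℝ) 1,
      |fderiv ℝ f (b + α • (x - b)) (EuclideanSpace.single k 1) - c| ≤ ε) :
    |IG f k x b - (x k - b k) * c| ≤ ε * |x k - b k| := by
  set I := ∫ α in (0:ℝ)..1, fderiv ℝ f (b + α • (x - b)) (EuclideanSpace.single k 1)
  have hI : |I - c| ≤ ε := by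
    simpa using norm_intervalIntegral_sub_smul_le zero_le_one
      ((hf.continuous_fderiv_apply_segment b x _).intervalIntegrable 0 1) h
  calc |IG f k x b - (x k - b k) * c| = |x k - b k| * |I - c| := by
        rw [← abs_mul, IG, mul_sub]
    _ ≤ |x k - b k| * ε := by gcongr
    _ = ε * |x k - b k| := mul_comm _ _

theorem approx_constant_gradient_bound_general {d : ℕ} (f : EuclideanSpace ℝ (Fin d) → ℝ)
    (hf : ContDiff ℝ 1 f) (b x x' : EuclideanSpace ℝ (Fin d)) (k : Fin d) (c ε : ℝ)
    (h1 : ∀ α ∈ Set.Icc (0:ℝ) 1,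
      |fderiv ℝ f (b + α • (x - b)) (EuclideanSpace.single k 1) - c| ≤ ε)
    (h2 : ∀ α ∈ Set.Icc (0:ℝ) 1,
      |fderiv ℝ f (b + α • (x' - b)) (EuclideanSpace.single k 1) - c| ≤ ε) :
    |IG f k x b - IG f k x' b - (x k - x' k) * c| ≤ ε * (|x k - b k| + |x' k - b k|) := by
  have hsplit : IG f k x b - IG f k x' b - (x k - x' k) * c
      = (IG f k x b - (x k - b k) * c) - (IG f k x' b - (x' k - b k) * c) := by ring
  calc |IG f k x b - IG f k x' b - (x k - x' k) * c|
      ≤ |IG f k x b - (x k - b k) * c| + |IG f k x' b - (x' k - b k) * c| := by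
        rw [hsplit]; exact abs_sub _ _
    _ ≤ ε * |x k - b k| + ε * |x' k - b k| :=
        add_le_add (abs_IG_sub_mul_le hf b x k h1) (abs_IG_sub_mul_le hf b x' k h2)
    _ = ε * (|x k - b k| + |x' k - b k|) := (mul_add _ _ _).symm

theorem approx_constant_gradient_bound {d : ℕ} (f : EuclideanSpace ℝ (Fin d) → ℝ)
    (hf : ContDiff ℝ 1 f) (b x x' : EuclideanSpace ℝ (Fin d)) (k : Fin d) (c ε : ℝ)
    (hε : 0 ≤ ε)
    (h1 : ∀ α ∈ Set.Icc (0:ℝ) 1,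
      |fderiv ℝ f (b + α • (x - b)) (EuclideanSpace.single k 1) - c| ≤ ε)
    (h2 : ∀ α ∈ Set.Icc (0:ℝ) 1,
      |fderiv ℝ f (b + α • (x' - b)) (EuclideanSpace.single k 1) - c| ≤ ε) :
    |IG f k x b - IG f k x' b - (x k - x' k) * c| ≤ ε * (|x k - b k| + |x' k - b k|) :=
  approx_constant_gradient_bound_general f hf b x x' k c ε h1 h2
end

section
/- Let f : ℝ^d → ℝ be continuously differentiable and x, b ∈ ℝ^d. If f(x) ≠ f(b), then there exists a coordinate j with IG_j(x; b) ≠ 0; that is, some feature receives a nonzero integrated gradients attribution. -/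
open intervalIntegral

theorem EuclideanSpace.clm_apply_eq_sum_single {ι : Type*} [Fintype ι] [DecidableEq ι]
    (L : EuclideanSpace ℝ ι →L[ℝ] ℝ) (v : EuclideanSpace ℝ ι) :
    L v = ∑ j, v j * L (EuclideanSpace.single j 1) := by
  conv_lhs => rw [← (EuclideanSpace.basisFun ι ℝ).sum_repr v]
  simp [map_sum]

theorem ContDiff.integral_fderiv_segment_eq_sub {E F : Type*} [NormedAddCommGroup E]
    [NormedSpace ℝ E] [NormedAddCommGroup F] [NormedSpace ℝ F] [CompleteSpace F] {f : E → F}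
    (hf : ContDiff ℝ 1 f) (x b : E) :
    ∫ α in (0:ℝ)..1, fderiv ℝ f (b + α • (x - b)) (x - b) = f x - f b := by
  have hγ : ∀ α : ℝ, HasDerivAt (fun t : ℝ => b + t • (x - b)) (x - b) α := fun α => by
    simpa using ((hasDerivAt_id α).smul_const (x - b)).const_add b
  have hderiv : ∀ α : ℝ, HasDerivAt (fun t : ℝ => f (b + t • (x - b)))
      (fderiv ℝ f (b + α • (x - b)) (x - b)) α := fun α =>
    ((hf.differentiable one_ne_zero).differentiableAt.hasFDerivAt).comp_hasDerivAt α (hγ α)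
  have hcont : Continuous fun α : ℝ => fderiv ℝ f (b + α • (x - b)) (x - b) := by
    have hf' := hf.continuous_fderiv one_ne_zero
    fun_prop
  simpa using integral_eq_sub_of_hasDerivAt (fun α _ => hderiv α) (hcont.intervalIntegrable 0 1)

theorem sum_IG_eq_sub {d : ℕ} {f : EuclideanSpace ℝ (Fin d) → ℝ} (hf : ContDiff ℝ 1 f)
    (x b : EuclideanSpace ℝ (Fin d)) :
    ∑ j, IG f j x b = f x - f b := by
  have hf' := hf.continuous_fderiv one_ne_zero
  rw [← hf.integral_fderiv_segment_eq_sub x b]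
  simp_rw [EuclideanSpace.clm_apply_eq_sum_single (fderiv ℝ f _) (x - b)]
  rw [integral_finsetSum fun j _ => (by fun_prop : Continuous _).intervalIntegrable 0 1]
  simp [IG, integral_const_mul]

theorem IG_sensitivity {d : ℕ} (f : EuclideanSpace ℝ (Fin d) → ℝ)
    (hf : ContDiff ℝ 1 f) (x b : EuclideanSpace ℝ (Fin d))
    (hne : f x ≠ f b) :
    ∃ j : Fin d, IG f j x b ≠ 0 := by
  by_contra! h
  rw [← sub_ne_zero, ← sum_IG_eq_sub hf] at hne
  exact hne (Finset.sum_eq_zero fun j _ => h j)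
end
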